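/- Fix d ≥ 1, σ > 0, γ > 0 and a unit vector u ∈ ℝ^d. Then the multidimensional Rashomon ratio along the ray μ = s·u tends to one as the distance between the means grows: lim_{s→∞} R(s·u) = 1, where R(μ) is the normalized uniform surface measure of {(p, t) ∈ S^d : p ≠ 0, E_{μ,σ}(p, t) ≤ γ}. -/

import Mathlib

open Classical MeasureTheory ProbabilityTheory

/-- `Φ`, the standard Gaussian cumulative distribution function. -/
noncomputable def Phi (x : ℝ) : ℝ := ((gaussianReal 0 1) (Set.Iic x)).toReal

/-- Euclidean dot product on `ℝ^d`. -/
noncomputable def dotp {d : ℕ} (a b : Fin d → ℝ) : ℝ := ∑ i, a i * b i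

/-- Euclidean norm of a vector in `ℝ^d`. -/
noncomputable def eucNorm {d : ℕ} (x : Fin d → ℝ) : ℝ := Real.sqrt (∑ i, (x i) ^ 2)

/-- `E_{μ,σ}(p, t)`: reducible error of the affine classifier with parameters `(p, t)` for
the antipodal equal-prior mixture of `N_d(−μ, σ²I)` and `N_d(μ, σ²I)`. -/
noncomputable def redErrMD (d : ℕ) (μ : Fin d → ℝ) (σ : ℝ) (p : Fin d → ℝ) (t : ℝ) : ℝ :=
  Phi (eucNorm μ / σ) - (1 / 2) * Phi ((|dotp p μ| - t) / (σ * eucNorm p))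
    - (1 / 2) * Phi ((t + |dotp p μ|) / (σ * eucNorm p))

/-- The (non-normalized) uniform surface measure on the unit sphere
`S^d ⊂ ℝ^{d+1}`. -/
noncomputable def sphereMeasure (d : ℕ) :
    Measure (Metric.sphere (0 : EuclideanSpace ℝ (Fin (d + 1))) 1) :=
  (volume : Measure (EuclideanSpace ℝ (Fin (d + 1)))).toSphere

/-- First `d` coordinates `p` of a point of `ℝ^{d+1}`. -/
noncomputable def pPart (d : ℕ) (x : EuclideanSpace ℝ (Fin (d + 1))) : Fin d → ℝ :=
  fun i => x i.castSucc

/-- Last coordinate `t` of a point of `ℝ^{d+1}`. -/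
noncomputable def tPart (d : ℕ) (x : EuclideanSpace ℝ (Fin (d + 1))) : ℝ :=
  x (Fin.last d)

/-- The multidimensional Rashomon ratio `R(μ)`: the normalized uniform surface measure of
`{(p, t) ∈ S^d : p ≠ 0, E_{μ,σ}(p, t) ≤ γ}`. -/
noncomputable def rashRatioMD (d : ℕ) (σ γ : ℝ) (μ : Fin d → ℝ) : ℝ :=
  (sphereMeasure d {x | pPart d x.val ≠ 0 ∧
      redErrMD d μ σ (pPart d x.val) (tPart d x.val) ≤ γ}).toReal
    / (sphereMeasure d Set.univ).toReal

/-!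
For fixed `(p, t)` with `p · u ≠ 0`, all three Gaussian arguments of `E_{s u, σ}(p, t)` tend to
`+∞` as `s → ∞`, so the error tends to `1 - 1/2 - 1/2 = 0` and `(p, t)` eventually lies in the
Rashomon set. The exceptional points `p · u = 0` form a great subsphere, which is null since
the cone over it lies in a hyperplane; dominated convergence for indicators then gives
`R(s u) → 1`.
-/

open Filter Set Topology

lemma Phi_monotone : Monotone Phi := fun _ _ hab =>
  ENNReal.toReal_mono (measure_ne_top _ _) (measure_mono (Iic_subset_Iic.mpr hab))

lemma tendsto_Phi_atTop : Tendsto Phi atTop (𝓝 1) := by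
  have h := tendsto_measure_Iic_atTop (gaussianReal 0 1)
  rw [measure_univ] at h
  exact (ENNReal.tendsto_toReal ENNReal.one_ne_top).comp h

lemma eucNorm_eq_norm {d : ℕ} (x : Fin d → ℝ) : eucNorm x = ‖WithLp.toLp 2 x‖ := by
  simp [eucNorm, EuclideanSpace.norm_eq]

lemma eucNorm_smul {d : ℕ} (s : ℝ) (x : Fin d → ℝ) : eucNorm (s • x) = |s| * eucNorm x := by
  simp only [eucNorm_eq_norm, WithLp.toLp_smul, norm_smul, Real.norm_eq_abs]

lemma eucNorm_pos {d : ℕ} {x : Fin d → ℝ} (hx : x ≠ 0) : 0 < eucNorm x := by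
  rw [eucNorm_eq_norm]
  exact norm_pos_iff.mpr (by simpa using hx)

lemma dotp_smul_right {d : ℕ} (p u : Fin d → ℝ) (s : ℝ) : dotp p (s • u) = s * dotp p u := by
  simp only [dotp, Pi.smul_apply, smul_eq_mul, Finset.mul_sum]
  exact Finset.sum_congr rfl fun _ _ => by ring

lemma tendsto_redErrMD_smul_atTop {d : ℕ} {σ : ℝ} (hσ : 0 < σ) {p u : Fin d → ℝ} (t : ℝ)
    (hpu : dotp p u ≠ 0) :
    Tendsto (fun s : ℝ => redErrMD d (s • u) σ p t) atTop (𝓝 0) := by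
  have hp : p ≠ 0 := by rintro rfl; simp [dotp] at hpu
  have hu : u ≠ 0 := by rintro rfl; simp [dotp] at hpu
  have hc : 0 < σ * eucNorm p := mul_pos hσ (eucNorm_pos hp)
  have hmargin : Tendsto (fun s : ℝ => |dotp p (s • u)|) atTop atTop := by
    simp only [dotp_smul_right, abs_mul]
    exact tendsto_abs_atTop_atTop.atTop_mul_const (abs_pos.mpr hpu)
  have hsep : Tendsto (fun s : ℝ => eucNorm (s • u) / σ) atTop atTop := by
    simp only [eucNorm_smul]
    exact (tendsto_abs_atTop_atTop.atTop_mul_const (eucNorm_pos hu)).atTop_div_const hσ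
  have hlower : Tendsto (fun s : ℝ => (|dotp p (s • u)| - t) / (σ * eucNorm p)) atTop atTop :=
    (tendsto_atTop_add_const_right _ (-t) hmargin).atTop_div_const hc
  have hupper : Tendsto (fun s : ℝ => (t + |dotp p (s • u)|) / (σ * eucNorm p)) atTop atTop :=
    (tendsto_atTop_add_const_left _ t hmargin).atTop_div_const hc
  have h := ((tendsto_Phi_atTop.comp hsep).sub
    ((tendsto_Phi_atTop.comp hlower).const_mul (1 / 2))).sub
    ((tendsto_Phi_atTop.comp hupper).const_mul (1 / 2))
  rwa [show (1 : ℝ) - 1 / 2 * 1 - 1 / 2 * 1 = 0 by norm_num] at h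

lemma MeasureTheory.Measure.toSphere_setOf_eq_zero_eq_zero {E : Type*} [NormedAddCommGroup E]
    [NormedSpace ℝ E] [MeasurableSpace E] [BorelSpace E] [FiniteDimensional ℝ E]
    (μ : Measure E) [μ.IsAddHaarMeasure] {f : E →ₗ[ℝ] ℝ} (hf : f ≠ 0) :
    μ.toSphere {x | f x = 0} = 0 := by
  have hmeas : MeasurableSet {x : Metric.sphere (0 : E) 1 | f x = 0} :=
    (isClosed_eq (f.continuous_of_finiteDimensional.comp continuous_subtype_val)
      continuous_const).measurableSet
  rw [μ.toSphere_apply' hmeas]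
  refine mul_eq_zero_of_right _ (measure_mono_null ?_
    (Measure.addHaar_submodule μ (LinearMap.ker f) (by rwa [Ne, LinearMap.ker_eq_top])))
  rintro _ ⟨r, -, _, ⟨x, hx, rfl⟩, rfl⟩
  simp_all

lemma ae_sphereMeasure_dotp_pPart_ne_zero {d : ℕ} {u : Fin d → ℝ} (hu : u ≠ 0) :
    ∀ᵐ x ∂sphereMeasure d, dotp (pPart d x.val) u ≠ 0 := by
  let f : EuclideanSpace ℝ (Fin (d + 1)) →ₗ[ℝ] ℝ :=
    ∑ i, u i • (EuclideanSpace.proj i.castSucc : EuclideanSpace ℝ (Fin (d + 1)) →L[ℝ] ℝ).toLinearMap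
  have hf : ∀ x, f x = dotp (pPart d x) u := fun x => by
    simp [f, dotp, pPart, mul_comm]
  obtain ⟨i, hi⟩ : ∃ i, u i ≠ 0 := Function.ne_iff.mp hu
  have hf0 : f ≠ 0 := fun h => hi <| by
    simpa [hf, dotp, pPart, PiLp.single_apply, Fin.castSucc_inj] using
      LinearMap.congr_fun h (EuclideanSpace.single i.castSucc 1)
  rw [ae_iff]
  simpa [sphereMeasure, hf] using volume.toSphere_setOf_eq_zero_eq_zero hf0

instance (d : ℕ) : IsFiniteMeasure (sphereMeasure d) :=
  inferInstanceAs (IsFiniteMeasure volume.toSphere)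

lemma measurable_redErrMD (d : ℕ) (μ : Fin d → ℝ) (σ : ℝ) :
    Measurable fun q : (Fin d → ℝ) × ℝ => redErrMD d μ σ q.1 q.2 := by
  have hPhi : Measurable Phi := Phi_monotone.measurable
  unfold redErrMD dotp eucNorm
  fun_prop

lemma measurableSet_rashomon (d : ℕ) (σ γ : ℝ) (μ : Fin d → ℝ) :
    MeasurableSet {x : Metric.sphere (0 : EuclideanSpace ℝ (Fin (d + 1))) 1 |
      pPart d x.val ≠ 0 ∧ redErrMD d μ σ (pPart d x.val) (tPart d x.val) ≤ γ} := by
  have hp : Measurable fun x : Metric.sphere (0 : EuclideanSpace ℝ (Fin (d + 1))) 1 =>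
      pPart d x.val := by
    unfold pPart; fun_prop
  have ht : Measurable fun x : Metric.sphere (0 : EuclideanSpace ℝ (Fin (d + 1))) 1 =>
      tPart d x.val := by
    unfold tPart; fun_prop
  exact (hp (measurableSet_singleton 0)).compl.inter
    (measurableSet_le ((measurable_redErrMD d μ σ).comp (hp.prodMk ht)) measurable_const)

lemma tendsto_measure_toReal_div_univ_of_ae_eventually_mem {α ι : Type*} [MeasurableSpace α]
    {μ : Measure α} [IsFiniteMeasure μ] (hμ : μ ≠ 0) {l : Filter ι} [l.IsCountablyGenerated]
    {A : ι → Set α}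
    (hA : ∀ i, MeasurableSet (A i)) (h : ∀ᵐ x ∂μ, ∀ᶠ i in l, x ∈ A i) :
    Tendsto (fun i => (μ (A i)).toReal / (μ univ).toReal) l (𝓝 1) := by
  have hlim := tendsto_measure_of_ae_tendsto_indicator_of_isFiniteMeasure l MeasurableSet.univ hA
    (by simpa using h)
  have hdiv := ((ENNReal.tendsto_toReal (measure_ne_top μ univ)).comp hlim).div_const
    (μ univ).toReal
  rwa [div_self (ENNReal.toReal_ne_zero.mpr
    ⟨Measure.measure_univ_ne_zero.mpr hμ, measure_ne_top μ univ⟩)] at hdiv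

theorem rashRatioMD_tendsto_one_general
    (d : ℕ) (σ γ : ℝ) (hσ : 0 < σ) (hγ : 0 < γ)
    (u : Fin d → ℝ) (hu : eucNorm u = 1) :
    Filter.Tendsto (fun s : ℝ => rashRatioMD d σ γ (s • u)) Filter.atTop (nhds 1) := by
  have hu0 : u ≠ 0 := by rintro rfl; simp [eucNorm] at hu
  refine tendsto_measure_toReal_div_univ_of_ae_eventually_mem (by simp [sphereMeasure])
    (fun s => measurableSet_rashomon d σ γ (s • u)) ?_
  filter_upwards [ae_sphereMeasure_dotp_pPart_ne_zero hu0] with x hx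
  have hp : pPart d x.val ≠ 0 := by rintro h; simp [h, dotp] at hx
  filter_upwards [(tendsto_redErrMD_smul_atTop hσ _ hx).eventually_lt_const hγ] with s hs
  exact ⟨hp, hs.le⟩

/-- Along a ray `μ = s·u` with `u` a unit vector, the multidimensional
Rashomon ratio tends to one as the distance between the class means grows:
`lim_{s→∞} R(s·u) = 1`. -/
theorem rashRatioMD_tendsto_one
    (d : ℕ) (hd : 1 ≤ d) (σ γ : ℝ) (hσ : 0 < σ) (hγ : 0 < γ)
    (u : Fin d → ℝ) (hu : eucNorm u = 1) :
    Filter.Tendsto (fun s : ℝ => rashRatioMD d σ γ (s • u)) Filter.atTop (nhds 1) :=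
  rashRatioMD_tendsto_one_general d σ γ hσ hγ u hu
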